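/- For α > 0, the scalar curvature function R_α is nonincreasing on (0,∞): for all 0 < r ≤ s one has R_α(s) ≤ R_α(r) (equivalently, its derivative satisfies ∂_r R_α(r) ≤ 0 for all r > 0). -/

import Mathlib

/-! With `θ = arctan (r / α)` one has `φ_α = α θ`, `φ_α' = cos² θ` and `φ_α'' = -2 sin θ cos³ θ / α`,
so `α² R_α / 2 = 4 (sin θ / θ) cos³ θ + (sin θ / θ)² (1 + cos² θ)`. On `(0, π/2]` both `sin θ / θ`
and `cos θ` are nonnegative and nonincreasing, and `θ` increases with `r`. -/

open Real

noncomputable def warp (α : ℝ) : ℝ → ℝ := fun r => α * arctan (r / α)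

noncomputable def scalarCurv (α : ℝ) : ℝ → ℝ := fun r =>
  2 * (-2 * deriv (deriv (warp α)) r / warp α r
        + (1 - (deriv (warp α) r) ^ 2) / (warp α r) ^ 2)

open Set

namespace Real

theorem mul_cos_le_sin {x : ℝ} (h0 : 0 ≤ x) (hπ : x ≤ π) : x * cos x ≤ sin x := by
  rcases lt_or_ge x (π / 2) with hx | hx
  · have hcos : 0 < cos x := cos_pos_of_mem_Ioo ⟨by linarith [pi_pos], hx⟩
    calc x * cos x ≤ tan x * cos x := by gcongr; exact le_tan h0 hx
      _ = sin x := tan_mul_cos hcos.ne'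
  · have hcos : cos x ≤ 0 := cos_nonpos_of_pi_div_two_le_of_le hx (by linarith [pi_pos])
    nlinarith [sin_nonneg_of_nonneg_of_le_pi h0 hπ]

theorem antitoneOn_sin_div_self : AntitoneOn (fun x => sin x / x) (Ioc 0 π) := by
  have hderiv : ∀ x ≠ 0, HasDerivAt (fun x => sin x / x) ((cos x * x - sin x * 1) / x ^ 2) x :=
    fun x hx => (hasDerivAt_sin x).div (hasDerivAt_id x) hx
  apply antitoneOn_of_deriv_nonpos (convex_Ioc 0 π)
  · exact fun x hx => (hderiv x hx.1.ne').continuousAt.continuousWithinAt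
  · rw [interior_Ioc]
    exact fun x hx => (hderiv x hx.1.ne').differentiableAt.differentiableWithinAt
  · rw [interior_Ioc]
    intro x hx
    rw [(hderiv x hx.1.ne').deriv]
    have hcos := mul_cos_le_sin hx.1.le hx.2.le
    exact div_nonpos_of_nonpos_of_nonneg (by linarith) (sq_nonneg x)

end Real

theorem hasDerivAt_arctan_div (α r : ℝ) :
    HasDerivAt (fun r => arctan (r / α)) (cos (arctan (r / α)) ^ 2 / α) r := by
  refine ((hasDerivAt_arctan (r / α)).comp r ((hasDerivAt_id r).div_const α)).congr_deriv ?_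
  rw [cos_sq_arctan, one_div_mul_one_div, div_div]

section Warp

variable {α : ℝ}

theorem hasDerivAt_warp (hα : α ≠ 0) (r : ℝ) :
    HasDerivAt (warp α) (cos (arctan (r / α)) ^ 2) r := by
  refine ((hasDerivAt_arctan_div α r).const_mul α).congr_deriv ?_
  field_simp

theorem deriv_warp (hα : α ≠ 0) : deriv (warp α) = fun r => cos (arctan (r / α)) ^ 2 :=
  funext fun r => (hasDerivAt_warp hα r).deriv

theorem deriv_deriv_warp (hα : α ≠ 0) (r : ℝ) :
    deriv (deriv (warp α)) r =
      -2 * sin (arctan (r / α)) * cos (arctan (r / α)) ^ 3 / α := by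
  rw [deriv_warp hα]
  refine (((hasDerivAt_cos _).comp r (hasDerivAt_arctan_div α r)).pow 2).deriv.trans ?_
  simp only [Function.comp_apply, Nat.cast_ofNat]
  ring

noncomputable def scalarCurvAngular (θ : ℝ) : ℝ :=
  4 * (sin θ / θ) * cos θ ^ 3 + (sin θ / θ) ^ 2 * (1 + cos θ ^ 2)

theorem scalarCurv_eq (hα : α ≠ 0) {r : ℝ} (hr : r ≠ 0) :
    scalarCurv α r = 2 / α ^ 2 * scalarCurvAngular (arctan (r / α)) := by
  have hθ : arctan (r / α) ≠ 0 := by simp [hr, hα]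
  simp only [scalarCurv, scalarCurvAngular, deriv_deriv_warp hα, warp]
  rw [deriv_warp hα]
  field_simp
  linear_combination (-(1 + cos (arctan (r / α)) ^ 2)) * sin_sq_add_cos_sq (arctan (r / α))

end Warp

theorem antitoneOn_scalarCurvAngular : AntitoneOn scalarCurvAngular (Ioc 0 (π / 2)) := by
  intro a ha b hb hab
  have hsinc : sin b / b ≤ sin a / a :=
    antitoneOn_sin_div_self (Ioc_subset_Ioc_right (by linarith [pi_pos]) ha)
      (Ioc_subset_Ioc_right (by linarith [pi_pos]) hb) hab
  have hcos : cos b ≤ cos a :=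
    antitoneOn_cos ⟨ha.1.le, by linarith [ha.2, pi_pos]⟩ ⟨hb.1.le, by linarith [hb.2, pi_pos]⟩ hab
  have hsinc_nonneg : 0 ≤ sin b / b :=
    div_nonneg (sin_nonneg_of_nonneg_of_le_pi hb.1.le (by linarith [hb.2, pi_pos])) hb.1.le
  have hcos_nonneg : 0 ≤ cos b := cos_nonneg_of_mem_Icc ⟨by linarith [hb.1, pi_pos], hb.2⟩
  have hsinc_nonneg' : 0 ≤ sin a / a := hsinc_nonneg.trans hsinc
  unfold scalarCurvAngular
  gcongr

/-- `R_α` is nonincreasing on `(0,∞)`: for `0 < r ≤ s`, `R_α(s) ≤ R_α(r)`. -/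
theorem stmt_6 (α : ℝ) (hα : 0 < α) :
    ∀ r s : ℝ, 0 < r → r ≤ s → scalarCurv α s ≤ scalarCurv α r := by
  intro r s hr hrs
  have hs : 0 < s := hr.trans_le hrs
  have arctan_mem : ∀ {t : ℝ}, 0 < t → arctan (t / α) ∈ Ioc 0 (π / 2) := fun ht =>
    ⟨arctan_pos.2 (div_pos ht hα), (arctan_lt_pi_div_two _).le⟩
  rw [scalarCurv_eq hα.ne' hr.ne', scalarCurv_eq hα.ne' hs.ne']
  have hθ : arctan (r / α) ≤ arctan (s / α) := arctan_mono (by gcongr)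
  exact mul_le_mul_of_nonneg_left
    (antitoneOn_scalarCurvAngular (arctan_mem hr) (arctan_mem hs) hθ) (by positivity)
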